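/- Let N ≥ 3 be a fixed integer and m an integer with 1 ≤ m < N/2. For each ε ∈ (0,1/3] let Y^{(ε)} = (Y^{(ε)}_k, k ∈ ℤ) be a strictly stationary Markov chain satisfying Condition S(N,ε), and set A_ε := {Y^{(ε)}_0 = N} and B_ε := {Y^{(ε)}_{-m} = Y^{(ε)}_m = N−m}. Then P(A_ε ∩ B_ε) ~ ε^{2N−1} as ε → 0+. -/

import Mathlib

open MeasureTheory ProbabilityTheory Filter Set
open scoped ENNReal Topology

noncomputable section

variable {Ω : Type*}

/-- The σ-field generated by the random variables `X k`, `k ∈ S`. -/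
def sigmaOf [MeasurableSpace Ω] (X : ℤ → Ω → ℝ) (S : Set ℤ) : MeasurableSpace Ω :=
  ⨆ k ∈ S, MeasurableSpace.comap (X k) inferInstance

/-- A sequence indexed by `ℤ` is strictly stationary if its law (as a measure on `ℤ → ℝ`)
is invariant under the index shift. -/
def StrictlyStationary [MeasurableSpace Ω] (P : Measure Ω) (X : ℤ → Ω → ℝ) : Prop :=
  ∀ n : ℤ, Measure.map (fun ω => fun k : ℤ => X (k + n) ω) P
    = Measure.map (fun ω => fun k : ℤ => X k ω) P

/-- Markov chain: for each `k`, the past `σ(X_j, j ≤ k)` and the future `σ(X_j, j ≥ k)`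
are conditionally independent given the present `σ(X_k)`. -/
def IsMarkovChain [MeasurableSpace Ω] (P : Measure Ω) (X : ℤ → Ω → ℝ) : Prop :=
  (∀ k, Measurable (X k)) ∧
  ∀ k : ℤ, ∀ A B : Set Ω, MeasurableSet[sigmaOf X (Set.Iic k)] A →
    MeasurableSet[sigmaOf X (Set.Ici k)] B →
    (fun ω => (P[A.indicator (fun _ => (1:ℝ)) | sigmaOf X {k}]) ω *
              (P[B.indicator (fun _ => (1:ℝ)) | sigmaOf X {k}]) ω)
      =ᵐ[P] P[(A ∩ B).indicator (fun _ => (1:ℝ)) | sigmaOf X {k}]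

/-- Covariance of two real random variables. -/
def covP [MeasurableSpace Ω] (P : Measure Ω) (f g : Ω → ℝ) : ℝ :=
  ∫ ω, (f ω - ∫ x, f x ∂P) * (g ω - ∫ x, g x ∂P) ∂P

/-- Correlation coefficient of two real random variables (with the convention 0/0 = 0). -/
def corrP [MeasurableSpace Ω] (P : Measure Ω) (f g : Ω → ℝ) : ℝ :=
  covP P f g / (Real.sqrt (covP P f f) * Real.sqrt (covP P g g))

/-- Maximal correlation coefficient ρ(𝒜,ℬ): the supremum of |Corr(f,g)| over square-integrable
`f` measurable w.r.t. `mA` and `g` measurable w.r.t. `mB`. -/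
def maxCorr (mA mB : MeasurableSpace Ω) [MeasurableSpace Ω] (P : Measure Ω) : ℝ :=
  sSup {r : ℝ | ∃ f g : Ω → ℝ, Measurable[mA] f ∧ Measurable[mB] g ∧
    MemLp f 2 P ∧ MemLp g 2 P ∧ r = |corrP P f g|}

/-- η(A,B) = P(A∩B)/(P(A)P(B)) (with the convention 0/0 = 0). -/
def etaP [MeasurableSpace Ω] (P : Measure Ω) (A B : Set Ω) : ℝ :=
  (P (A ∩ B)).toReal / ((P A).toReal * (P B).toReal)

/-- ψ dependence coefficient, with values in `[0,∞]`. -/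
def psiDep (mA mB : MeasurableSpace Ω) [MeasurableSpace Ω] (P : Measure Ω) : ℝ≥0∞ :=
  ⨆ (A : Set Ω) (B : Set Ω) (_ : MeasurableSet[mA] A) (_ : MeasurableSet[mB] B)
    (_ : 0 < P A) (_ : 0 < P B), ENNReal.ofReal |etaP P A B - 1|

/-- A finite partition of `Ω` into `m`-measurable events of positive probability. -/
def IsFinPartition (m : MeasurableSpace Ω) [MeasurableSpace Ω] (P : Measure Ω)
    {n : ℕ} (A : Fin n → Set Ω) : Prop :=
  (∀ i, MeasurableSet[m] (A i)) ∧ (∀ i, 0 < P (A i)) ∧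
  (Pairwise fun i j => Disjoint (A i) (A j)) ∧ (⋃ i, A i) = Set.univ

/-- Coefficient of information I(𝒜,ℬ), valued in `[0,∞]`
(note `Real.log 0 = 0`, so `0 log 0 = 0` automatically). -/
def infoCoef (mA mB : MeasurableSpace Ω) [MeasurableSpace Ω] (P : Measure Ω) : ℝ≥0∞ :=
  ⨆ (nI : ℕ) (nJ : ℕ) (A : Fin nI → Set Ω) (B : Fin nJ → Set Ω)
    (_ : IsFinPartition mA P A) (_ : IsFinPartition mB P B),
    ENNReal.ofReal (∑ i, ∑ j,
      (P (A i)).toReal * (P (B j)).toReal *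
        (etaP P (A i) (B j) * Real.log (etaP P (A i) (B j))))

/-- β dependence coefficient (absolute regularity coefficient). -/
def betaDep (mA mB : MeasurableSpace Ω) [MeasurableSpace Ω] (P : Measure Ω) : ℝ :=
  sSup {r : ℝ | ∃ (nI nJ : ℕ) (A : Fin nI → Set Ω) (B : Fin nJ → Set Ω),
    IsFinPartition mA P A ∧ IsFinPartition mB P B ∧
    r = (1/2) * ∑ i, ∑ j,
      |(P (A i ∩ B j)).toReal - (P (A i)).toReal * (P (B j)).toReal|}

/-- ρ(X,n) -/
def rhoMix [MeasurableSpace Ω] (P : Measure Ω) (X : ℤ → Ω → ℝ) (n : ℕ) : ℝ :=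
  maxCorr (sigmaOf X (Set.Iic 0)) (sigmaOf X (Set.Ici (n:ℤ))) P

/-- β(X,n) -/
def betaMix [MeasurableSpace Ω] (P : Measure Ω) (X : ℤ → Ω → ℝ) (n : ℕ) : ℝ :=
  betaDep (sigmaOf X (Set.Iic 0)) (sigmaOf X (Set.Ici (n:ℤ))) P

/-- I(X,n) -/
def infoMix [MeasurableSpace Ω] (P : Measure Ω) (X : ℤ → Ω → ℝ) (n : ℕ) : ℝ≥0∞ :=
  infoCoef (sigmaOf X (Set.Iic 0)) (sigmaOf X (Set.Ici (n:ℤ))) P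

/-- ψ(X,n) -/
def psiMix [MeasurableSpace Ω] (P : Measure Ω) (X : ℤ → Ω → ℝ) (n : ℕ) : ℝ≥0∞ :=
  psiDep (sigmaOf X (Set.Iic 0)) (sigmaOf X (Set.Ici (n:ℤ))) P

/-- Interlaced maximal correlation coefficient ρ*(X,n): the supremum of
ρ(σ(X_k, k ∈ S), σ(X_k, k ∈ T)) over nonempty disjoint S, T ⊂ ℤ with dist(S,T) ≥ n. -/
def rhoStar [MeasurableSpace Ω] (P : Measure Ω) (X : ℤ → Ω → ℝ) (n : ℕ) : ℝ :=
  sSup {r : ℝ | ∃ S T : Set ℤ, S.Nonempty ∧ T.Nonempty ∧ Disjoint S T ∧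
    (∀ s ∈ S, ∀ t ∈ T, (n:ℤ) ≤ |s - t|) ∧ r = maxCorr (sigmaOf X S) (sigmaOf X T) P}

/-- Condition S(N,ε) of Definition 2.1: a strictly stationary Markov chain with state space
`{0,1,...,N}` (as reals) whose joint law of `(Y_0, Y_1)` is as prescribed. -/
def ConditionS [MeasurableSpace Ω] (P : Measure Ω) (N : ℕ) (ε : ℝ) (Y : ℤ → Ω → ℝ) : Prop :=
  StrictlyStationary P Y ∧ IsMarkovChain P Y ∧
  (∀ᵐ ω ∂P, ∃ i : ℕ, i ≤ N ∧ Y 0 ω = (i:ℝ)) ∧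
  (P {ω | Y 0 ω = 0 ∧ Y 1 ω = 0}).toReal
      = 1 - 2 * (ε^(2*N-1) + ∑ u ∈ Finset.Icc 1 (N-1), ε^(2*u)) ∧
  (∀ m : ℕ, 1 ≤ m → m ≤ N - 1 →
    (P {ω | Y 0 ω = (m:ℝ) - 1 ∧ Y 1 ω = (m:ℝ)}).toReal = ε^(2*m) ∧
    (P {ω | Y 0 ω = (m:ℝ) ∧ Y 1 ω = (m:ℝ) - 1}).toReal = ε^(2*m)) ∧
  (P {ω | Y 0 ω = (N:ℝ) - 1 ∧ Y 1 ω = (N:ℝ)}).toReal = ε^(2*N-1) ∧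
  (P {ω | Y 0 ω = (N:ℝ) ∧ Y 1 ω = (N:ℝ) - 1}).toReal = ε^(2*N-1) ∧
  (∀ i j : ℕ, i ≤ N → j ≤ N → ((i = j ∧ 1 ≤ i) ∨ 2 ≤ |(i:ℤ) - (j:ℤ)|) →
    P {ω | Y 0 ω = (i:ℝ) ∧ Y 1 ω = (j:ℝ)} = 0)

/-- `m`-step transition probability `P(Y_m = j | Y_0 = i)` (with the convention 0/0 = 0). -/
def transProb [MeasurableSpace Ω] (P : Measure Ω) (Y : ℤ → Ω → ℝ) (m : ℕ) (i j : ℕ) : ℝ :=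
  (P {ω | Y 0 ω = (i:ℝ) ∧ Y (m:ℤ) ω = (j:ℝ)}).toReal / (P {ω | Y 0 ω = (i:ℝ)}).toReal


/-! Almost surely the chain moves by at most one unit per step, so on the event the path is
forced: it climbs `N - m, …, N` on `[-m, 0]` and descends `N, …, N - m` on `[0, m]`. The Markov
property at time `0` factorises the probability as `P(climb) P(descent) / P(Y₀ = N)`, and both path
probabilities equal `P(Y₀ = N) ∏ p(N - i, N - i - 1)`, a product of downward transition
probabilities (for the climb, read backwards in time, because Condition S gives the edges
`k - 1 → k` and `k → k - 1` the same weight). So `P(A ∩ B) = ε^(2N-1) (∏ p(N - i, N - i - 1))²`,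
and each `p(k, k - 1)` lies in `[(1 + ε)⁻¹, 1]`: the competing move `k → k + 1` has at most `ε`
times the weight of `k → k - 1`. -/

section Markov

variable [MeasurableSpace Ω] {P : Measure Ω} {Y : ℤ → Ω → ℝ}

lemma sigmaOf_le (hY : ∀ k, Measurable (Y k)) (S : Set ℤ) : sigmaOf Y S ≤ ‹MeasurableSpace Ω› :=
  iSup₂_le fun k _ => (hY k).comap_le

lemma measurableSet_sigmaOf {k : ℤ} {S : Set ℤ} (hk : k ∈ S) (c : ℝ) :
    MeasurableSet[sigmaOf Y S] {ω | Y k ω = c} :=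
  le_iSup₂ (f := fun k (_ : k ∈ S) => MeasurableSpace.comap (Y k) inferInstance) k hk _
    ⟨{c}, measurableSet_singleton c, rfl⟩

lemma sigmaOf_singleton (k : ℤ) :
    sigmaOf Y {k} = MeasurableSpace.comap (Y k) inferInstance := by
  simp [sigmaOf]

lemma IsMarkovChain.measure_inter [IsFiniteMeasure P] (hMC : IsMarkovChain P Y) {k : ℤ}
    {c : ℝ} {A B : Set Ω} (hA : MeasurableSet[sigmaOf Y (Iic k)] A)
    (hB : MeasurableSet[sigmaOf Y (Ici k)] B)
    (hAc : A ⊆ {ω | Y k ω = c}) (hBc : B ⊆ {ω | Y k ω = c}) :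
    (P (A ∩ B)).toReal = (P A).toReal * (P B).toReal / (P {ω | Y k ω = c}).toReal := by
  set C := {ω | Y k ω = c}
  rcases eq_or_ne (P C) 0 with hC | hC
  · have hA0 : P A = 0 := measure_mono_null hAc hC
    simp [hC, hA0, measure_mono_null inter_subset_left hA0]
  obtain ⟨ω₀, hω₀⟩ := nonempty_of_measure_ne_zero hC
  have hG : sigmaOf Y {k} ≤ ‹MeasurableSpace Ω› := sigmaOf_le hMC.1 _
  have hCG : MeasurableSet[sigmaOf Y {k}] C := measurableSet_sigmaOf (mem_singleton k) c
  -- Integrate the conditional independence identity over the atom `C` of `σ(Y k)`, on which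
  -- every `σ(Y k)`-measurable function is constant.
  have hconst (h : Ω → ℝ) (hh : StronglyMeasurable[sigmaOf Y {k}] h) :
      ∫ ω in C, h ω ∂P = h ω₀ * (P C).toReal := by
    rw [sigmaOf_singleton] at hh
    rw [setIntegral_congr_fun (hG _ hCG) fun ω hω => hh.factorsThrough (hω.trans hω₀.symm),
      setIntegral_const, measureReal_def, smul_eq_mul, mul_comm]
  have hind (D : Set Ω) (hD : D ⊆ C) (hDm : MeasurableSet D) :
      ∫ ω in C, P[D.indicator (fun _ => (1:ℝ)) | sigmaOf Y {k}] ω ∂P = (P D).toReal := by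
    rw [setIntegral_condExp hG ((integrable_const _).indicator hDm) hCG,
      setIntegral_indicator hDm, inter_eq_right.mpr hD]
    simp [measureReal_def]
  have hAm := sigmaOf_le hMC.1 _ _ hA
  have hBm := sigmaOf_le hMC.1 _ _ hB
  have hα := hind A hAc hAm
  have hβ := hind B hBc hBm
  have hαβ := hind (A ∩ B) (inter_subset_left.trans hAc) (hAm.inter hBm)
  rw [← integral_congr_ae (hMC.2 k A B hA hB).restrict] at hαβ
  simp_rw [← Pi.mul_apply] at hαβ
  rw [hconst _ (stronglyMeasurable_condExp.mul stronglyMeasurable_condExp)] at hαβ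
  rw [hconst _ stronglyMeasurable_condExp] at hα hβ
  have hCpos : (P C).toReal ≠ 0 := ENNReal.toReal_ne_zero.mpr ⟨hC, measure_ne_top P C⟩
  rw [← hα, ← hβ, ← hαβ, Pi.mul_apply]
  field_simp

lemma transProb_le_one [IsFiniteMeasure P] (n i j : ℕ) : transProb P Y n i j ≤ 1 :=
  div_le_one_of_le₀ (ENNReal.toReal_mono (measure_ne_top P _) (measure_mono fun _ h => h.1))
    ENNReal.toReal_nonneg

end Markov

section Stationary

variable [MeasurableSpace Ω] {P : Measure Ω} {Y : ℤ → Ω → ℝ}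

lemma StrictlyStationary.measure_shift (hst : StrictlyStationary P Y)
    (hY : ∀ k, Measurable (Y k)) (n : ℤ) {p : (ℤ → ℝ) → Prop} (hp : MeasurableSet {f | p f}) :
    P {ω | p fun k => Y (k + n) ω} = P {ω | p fun k => Y k ω} := by
  have := congrArg (· {f | p f}) (hst n)
  rwa [Measure.map_apply (by fun_prop) hp, Measure.map_apply (by fun_prop) hp] at this

lemma StrictlyStationary.ae_shift (hst : StrictlyStationary P Y)
    (hY : ∀ k, Measurable (Y k)) (n : ℤ) {p : (ℤ → ℝ) → Prop} (hp : MeasurableSet {f | p f})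
    (h : ∀ᵐ ω ∂P, p fun k => Y k ω) : ∀ᵐ ω ∂P, p fun k => Y (k + n) ω := by
  rw [ae_iff] at h ⊢
  rwa [hst.measure_shift hY n (p := fun f => ¬p f) hp.compl]

lemma StrictlyStationary.measure_eq (hst : StrictlyStationary P Y)
    (hY : ∀ k, Measurable (Y k)) (n : ℤ) (a : ℝ) :
    P {ω | Y n ω = a} = P {ω | Y 0 ω = a} := by
  simpa using hst.measure_shift hY n (p := fun f => f 0 = a) (by measurability)

lemma StrictlyStationary.measure_eq_and_succ_eq (hst : StrictlyStationary P Y)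
    (hY : ∀ k, Measurable (Y k)) (n : ℤ) (a b : ℝ) :
    P {ω | Y n ω = a ∧ Y (n + 1) ω = b} = P {ω | Y 0 ω = a ∧ Y 1 ω = b} := by
  simpa [add_comm] using hst.measure_shift hY n (p := fun f => f 0 = a ∧ f 1 = b)
    (by measurability)

lemma StrictlyStationary.measure_eq_and_pred_eq (hst : StrictlyStationary P Y)
    (hY : ∀ k, Measurable (Y k)) (n : ℤ) (a b : ℝ) :
    P {ω | Y n ω = a ∧ Y (n - 1) ω = b} = P {ω | Y 0 ω = b ∧ Y 1 ω = a} := by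
  simpa [and_comm] using hst.measure_shift hY (n - 1) (p := fun f => f 1 = a ∧ f 0 = b)
    (by measurability)

end Stationary

section Paths

def pathEvent (Y : ℤ → Ω → ℝ) (t : ℕ → ℤ) (v : ℕ → ℝ) (n : ℕ) : Set Ω :=
  {ω | ∀ i ≤ n, Y (t i) ω = v i}

lemma pathEvent_succ (Y : ℤ → Ω → ℝ) (t : ℕ → ℤ) (v : ℕ → ℝ) (n : ℕ) :
    pathEvent Y t v (n + 1)
      = pathEvent Y t v n ∩ {ω | Y (t n) ω = v n ∧ Y (t (n + 1)) ω = v (n + 1)} := by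
  ext ω
  simp only [pathEvent, mem_inter_iff]
  exact ⟨fun h => ⟨fun i hi => h i (by omega), h n (by omega), h _ le_rfl⟩,
    fun ⟨h, _, h'⟩ i hi => (Nat.le_succ_iff.1 hi).elim (h i) fun hi => hi ▸ h'⟩

variable [MeasurableSpace Ω] {P : Measure Ω} {Y : ℤ → Ω → ℝ}

lemma measurableSet_pathEvent {t : ℕ → ℤ} {v : ℕ → ℝ} {n : ℕ} {S : Set ℤ}
    (ht : ∀ i ≤ n, t i ∈ S) : MeasurableSet[sigmaOf Y S] (pathEvent Y t v n) := by
  have : pathEvent Y t v n = ⋂ i, ⋂ (_ : i ≤ n), {ω | Y (t i) ω = v i} := by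
    ext ω; simp [pathEvent]
  rw [this]
  exact .iInter fun i => .iInter fun hi => measurableSet_sigmaOf (ht i hi) _

lemma IsMarkovChain.measure_pathEvent_succ [IsFiniteMeasure P] (hMC : IsMarkovChain P Y)
    {t : ℕ → ℤ} (ht : StrictMono t ∨ StrictAnti t) (v : ℕ → ℝ) (n : ℕ) :
    (P (pathEvent Y t v (n + 1))).toReal = (P (pathEvent Y t v n)).toReal
      * (P {ω | Y (t n) ω = v n ∧ Y (t (n + 1)) ω = v (n + 1)}).toReal
      / (P {ω | Y (t n) ω = v n}).toReal := by
  have hpath : pathEvent Y t v n ⊆ {ω | Y (t n) ω = v n} := fun ω h => h n le_rfl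
  have hstep : {ω | Y (t n) ω = v n ∧ Y (t (n + 1)) ω = v (n + 1)} ⊆ {ω | Y (t n) ω = v n} :=
    fun ω h => h.1
  have hstep_meas {S : Set ℤ} (h0 : t n ∈ S) (h1 : t (n + 1) ∈ S) :
      MeasurableSet[sigmaOf Y S] {ω | Y (t n) ω = v n ∧ Y (t (n + 1)) ω = v (n + 1)} :=
    (measurableSet_sigmaOf h0 _).inter (measurableSet_sigmaOf h1 _)
  rw [pathEvent_succ]
  rcases ht with ht | ht
  · exact hMC.measure_inter (measurableSet_pathEvent fun i hi => mem_Iic.2 (ht.monotone hi))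
      (hstep_meas (mem_Ici.2 le_rfl) (mem_Ici.2 (ht n.lt_succ_self).le)) hpath hstep
  · rw [inter_comm, mul_comm (P (pathEvent Y t v n)).toReal]
    exact hMC.measure_inter
      (hstep_meas (mem_Iic.2 le_rfl) (mem_Iic.2 (ht n.lt_succ_self).le))
      (measurableSet_pathEvent fun i hi => mem_Ici.2 (ht.antitone hi)) hstep hpath

lemma IsMarkovChain.measure_pathEvent [IsFiniteMeasure P] (hMC : IsMarkovChain P Y)
    {t : ℕ → ℤ} (ht : StrictMono t ∨ StrictAnti t) (v : ℕ → ℝ) (n : ℕ) :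
    (P (pathEvent Y t v n)).toReal = (P {ω | Y (t 0) ω = v 0}).toReal
      * ∏ i ∈ Finset.range n, (P {ω | Y (t i) ω = v i ∧ Y (t (i + 1)) ω = v (i + 1)}).toReal
          / (P {ω | Y (t i) ω = v i}).toReal := by
  induction n with
  | zero =>
    simp [pathEvent]
  | succ n ih =>
    rw [hMC.measure_pathEvent_succ ht, ih, Finset.prod_range_succ]
    ring

end Paths

lemma eq_sub_of_abs_sub_succ_le_one {f : ℕ → ℝ} {n : ℕ} (hf : ∀ i < n, |f (i + 1) - f i| ≤ 1)
    (hn : f n = f 0 - n) {i : ℕ} (hi : i ≤ n) : f i = f 0 - i := by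
  have hmono : MonotoneOn (fun i : ℕ => f i + i) (Iic n) := by
    refine monotoneOn_of_le_succ ordConnected_Iic fun a _ _ ha => ?_
    rw [Order.succ_eq_add_one, mem_Iic] at *
    have := (abs_le.1 (hf a ha)).1
    push_cast
    linarith
  have h1 := hmono (mem_Iic.2 (Nat.zero_le n)) (mem_Iic.2 hi) (Nat.zero_le i)
  have h2 := hmono (mem_Iic.2 hi) (mem_Iic.2 le_rfl) hi
  simp only [hn, Nat.cast_zero] at h1 h2
  linarith

-- The common weight that Condition S gives to the transitions `k - 1 → k` and `k → k - 1`.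
def edgeWeight (N : ℕ) (ε : ℝ) (k : ℕ) : ℝ := if k < N then ε ^ (2 * k) else ε ^ (2 * N - 1)

lemma edgeWeight_pos {N : ℕ} {ε : ℝ} (hε : 0 < ε) (k : ℕ) : 0 < edgeWeight N ε k := by
  unfold edgeWeight; split_ifs <;> positivity

lemma edgeWeight_succ_le {N : ℕ} {ε : ℝ} (hε : 0 ≤ ε) (hε1 : ε ≤ 1) {k : ℕ} (hk : k + 1 ≤ N) :
    edgeWeight N ε (k + 1) ≤ ε * edgeWeight N ε k := by
  rw [edgeWeight, edgeWeight, if_pos (by omega : k < N)]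
  split_ifs with h
  · calc ε ^ (2 * (k + 1)) = ε * ε * ε ^ (2 * k) := by ring
      _ ≤ 1 * ε * ε ^ (2 * k) := by gcongr
      _ = ε * ε ^ (2 * k) := by ring
  · rw [show 2 * N - 1 = 2 * k + 1 by omega, pow_succ, mul_comm]

section ConditionS

variable [MeasurableSpace Ω] {P : Measure Ω} {N : ℕ} {ε : ℝ} {Y : ℤ → Ω → ℝ}

lemma ConditionS.ae_range (hS : ConditionS P N ε Y) (k : ℤ) :
    ∀ᵐ ω ∂P, ∃ i : ℕ, i ≤ N ∧ Y k ω = i := by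
  simpa using hS.1.ae_shift hS.2.1.1 k (p := fun f => ∃ i : ℕ, i ≤ N ∧ f 0 = i)
    (by measurability) hS.2.2.1

lemma ConditionS.ae_abs_sub_le_one (hS : ConditionS P N ε Y) :
    ∀ᵐ ω ∂P, ∀ k : ℤ, |Y (k + 1) ω - Y k ω| ≤ 1 := by
  have ⟨hst, hMC, _, _, _, _, _, hnull⟩ := hS
  have hjump (i j : ℕ) :
      ∀ᵐ ω ∂P, i ≤ N → j ≤ N → 2 ≤ |(i:ℤ) - j| → ¬(Y 0 ω = i ∧ Y 1 ω = j) := by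
    by_cases h : i ≤ N ∧ j ≤ N ∧ 2 ≤ |(i:ℤ) - j|
    · filter_upwards [measure_eq_zero_iff_ae_notMem.1 (hnull i j h.1 h.2.1 (.inr h.2.2))]
        with ω hω _ _ _ using hω
    · exact .of_forall fun ω hi hj hij => absurd ⟨hi, hj, hij⟩ h
  have h0 : ∀ᵐ ω ∂P, |Y 1 ω - Y 0 ω| ≤ 1 := by
    filter_upwards [hS.ae_range 0, hS.ae_range 1, ae_all_iff.2 fun i => ae_all_iff.2 (hjump i)]
      with ω ⟨i, hi, hYi⟩ ⟨j, hj, hYj⟩ hω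
    have : |(j:ℤ) - i| ≤ 1 := by
      have := hω i j hi hj
      rw [abs_sub_comm]
      by_contra h
      exact this (by omega) ⟨hYi, hYj⟩
    rw [hYi, hYj]
    exact_mod_cast this
  exact ae_all_iff.2 fun k => by
    simpa [add_comm] using hst.ae_shift hMC.1 k (p := fun f => |f 1 - f 0| ≤ 1)
      (by measurability) h0

lemma ConditionS.measure_edge (hS : ConditionS P N ε Y) {k : ℕ} (hk : 1 ≤ k) (hkN : k ≤ N) :
    (P {ω | Y 0 ω = ((k - 1 : ℕ):ℝ) ∧ Y 1 ω = k}).toReal = edgeWeight N ε k ∧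
    (P {ω | Y 0 ω = k ∧ Y 1 ω = ((k - 1 : ℕ):ℝ)}).toReal = edgeWeight N ε k := by
  rw [Nat.cast_pred hk, edgeWeight]
  split_ifs with h
  · exact hS.2.2.2.2.1 k hk (by omega)
  · obtain rfl : k = N := by omega
    exact ⟨hS.2.2.2.2.2.1, hS.2.2.2.2.2.2.1⟩

lemma ConditionS.measure_le_add (hS : ConditionS P N ε Y) {k : ℕ} (hk : 1 ≤ k) (hkN : k ≤ N) :
    P {ω | Y 0 ω = k} ≤ P {ω | Y 0 ω = k ∧ Y 1 ω = ((k - 1 : ℕ):ℝ)}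
      + P {ω | Y 0 ω = k ∧ Y 1 ω = ((k + 1 : ℕ):ℝ)} := by
  have hstay : ∀ᵐ ω ∂P, ¬(Y 0 ω = k ∧ Y 1 ω = k) :=
    measure_eq_zero_iff_ae_notMem.1 (hS.2.2.2.2.2.2.2 k k hkN hkN (.inl ⟨rfl, hk⟩))
  refine (measure_mono_ae ?_).trans (measure_union_le _ _)
  filter_upwards [hS.ae_range 1, hS.ae_abs_sub_le_one, hstay] with ω ⟨j, _, hj⟩ hω hωk h0
  have hjk : |(j:ℤ) - k| ≤ 1 := by
    have := hω 0
    rw [zero_add, hj, show Y 0 ω = k from h0] at this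
    exact_mod_cast this
  have hj' : j ≠ k := fun h => hωk ⟨h0, by rw [hj, h]⟩
  have : j = k - 1 ∨ j = k + 1 := by
    have := abs_le.1 hjk
    omega
  rcases this with rfl | rfl
  · exact .inl ⟨h0, hj⟩
  · exact .inr ⟨h0, hj⟩

lemma ConditionS.measure_top_succ_eq_zero (hS : ConditionS P N ε Y) :
    P {ω | Y 0 ω = N ∧ Y 1 ω = ((N + 1 : ℕ):ℝ)} = 0 := by
  refine measure_mono_null (fun ω h => ?_) (ae_iff.1 (hS.ae_range 1))
  rintro ⟨i, hi, hYi⟩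
  have : ((N + 1 : ℕ):ℝ) = i := h.2.symm.trans hYi
  norm_cast at this
  omega

lemma ConditionS.measure_top_toReal (hS : ConditionS P N ε Y) (hN : 1 ≤ N) :
    (P {ω | Y 0 ω = N}).toReal = ε ^ (2 * N - 1) := by
  have h := hS.measure_le_add hN le_rfl
  rw [hS.measure_top_succ_eq_zero, add_zero] at h
  rw [le_antisymm h (measure_mono fun _ h => h.1), (hS.measure_edge hN le_rfl).2, edgeWeight,
    if_neg (lt_irrefl N)]

lemma ConditionS.measure_succ_le_mul_measure_pred (hS : ConditionS P N ε Y) (hε : 0 < ε)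
    (hε1 : ε ≤ 1) {k : ℕ} (hk : 1 ≤ k) (hkN : k ≤ N) :
    (P {ω | Y 0 ω = k ∧ Y 1 ω = ((k + 1 : ℕ):ℝ)}).toReal
      ≤ ε * (P {ω | Y 0 ω = k ∧ Y 1 ω = ((k - 1 : ℕ):ℝ)}).toReal := by
  rw [(hS.measure_edge hk hkN).2]
  rcases hkN.lt_or_eq with hkN | rfl
  · have := (hS.measure_edge (k := k + 1) (by omega) hkN).1
    rw [Nat.add_sub_cancel] at this
    rw [this]
    exact edgeWeight_succ_le hε.le hε1 hkN
  · rw [hS.measure_top_succ_eq_zero, ENNReal.toReal_zero]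
    exact (mul_pos hε (edgeWeight_pos hε _)).le

lemma ConditionS.inv_one_add_le_transProb [IsFiniteMeasure P] (hS : ConditionS P N ε Y)
    (hε : 0 < ε) (hε1 : ε ≤ 1) {k : ℕ} (hk : 1 ≤ k) (hkN : k ≤ N) :
    (1 + ε)⁻¹ ≤ transProb P Y 1 k (k - 1) := by
  have hsum := ENNReal.toReal_mono (by finiteness) (hS.measure_le_add hk hkN)
  rw [ENNReal.toReal_add (measure_ne_top P _) (measure_ne_top P _)] at hsum
  have hup := hS.measure_succ_le_mul_measure_pred hε hε1 hk hkN
  have hdown := (hS.measure_edge hk hkN).2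
  have hpos := edgeWeight_pos (N := N) hε k
  have hle : (P {ω | Y 0 ω = k ∧ Y 1 ω = ((k - 1 : ℕ):ℝ)}).toReal ≤ (P {ω | Y 0 ω = k}).toReal :=
    ENNReal.toReal_mono (measure_ne_top P _) (measure_mono fun _ h => h.1)
  rw [transProb, Nat.cast_one, le_div_iff₀ (by linarith), inv_mul_le_iff₀ (by linarith)]
  nlinarith

lemma ConditionS.measure_descent_forward [IsFiniteMeasure P] (hS : ConditionS P N ε Y)
    (hN : 1 ≤ N) (m : ℕ) :
    (P (pathEvent Y (fun i => (i:ℤ)) (fun i => ((N - i : ℕ):ℝ)) m)).toReal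
      = ε ^ (2 * N - 1) * ∏ i ∈ Finset.range m, transProb P Y 1 (N - i) (N - i - 1) := by
  rw [hS.2.1.measure_pathEvent (.inl Nat.strictMono_cast)]
  simp only [Nat.cast_zero, Nat.sub_zero, hS.measure_top_toReal hN, Nat.cast_succ,
    hS.1.measure_eq_and_succ_eq hS.2.1.1, hS.1.measure_eq hS.2.1.1, transProb,
    Nat.sub_add_eq]

lemma ConditionS.measure_descent_backward [IsFiniteMeasure P] (hS : ConditionS P N ε Y)
    (hN : 1 ≤ N) {m : ℕ} (hm : m ≤ N) :
    (P (pathEvent Y (fun i => -(i:ℤ)) (fun i => ((N - i : ℕ):ℝ)) m)).toReal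
      = ε ^ (2 * N - 1) * ∏ i ∈ Finset.range m, transProb P Y 1 (N - i) (N - i - 1) := by
  rw [hS.2.1.measure_pathEvent (.inr Nat.strictMono_cast.neg)]
  simp only [Nat.cast_zero, neg_zero, Nat.sub_zero, hS.measure_top_toReal hN]
  congr 1
  refine Finset.prod_congr rfl fun i hi => ?_
  have hi : 1 ≤ N - i := by have := Finset.mem_range.1 hi; omega
  rw [Nat.cast_succ, neg_add', hS.1.measure_eq_and_pred_eq hS.2.1.1, hS.1.measure_eq hS.2.1.1,
    Nat.sub_add_eq, transProb, Nat.cast_one, (hS.measure_edge hi (Nat.sub_le N i)).1,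
    ← (hS.measure_edge hi (Nat.sub_le N i)).2]

lemma ConditionS.measure_peak_eq_inter (hS : ConditionS P N ε Y) {m : ℕ} (hm : m ≤ N) :
    P {ω | Y 0 ω = N ∧ Y (-(m:ℤ)) ω = ((N - m : ℕ):ℝ) ∧ Y m ω = ((N - m : ℕ):ℝ)}
      = P (pathEvent Y (fun i => -(i:ℤ)) (fun i => ((N - i : ℕ):ℝ)) m
          ∩ pathEvent Y (fun i => (i:ℤ)) (fun i => ((N - i : ℕ):ℝ)) m) := by
  refine measure_congr ?_
  filter_upwards [hS.ae_abs_sub_le_one] with ω hω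
  have hcast (i : ℕ) (hi : i ≤ m) : ((N - i : ℕ):ℝ) = N - i := Nat.cast_sub (hi.trans hm)
  have hback (i : ℕ) (_ : i < m) : |Y (-((i + 1 : ℕ):ℤ)) ω - Y (-(i:ℤ)) ω| ≤ 1 := by
    simpa [abs_sub_comm, neg_add'] using hω (-((i:ℤ) + 1))
  have hfwd (i : ℕ) (_ : i < m) : |Y ((i + 1 : ℕ):ℤ) ω - Y (i:ℤ) ω| ≤ 1 := by
    simpa using hω i
  refine propext ⟨fun ⟨h0, hneg, hpos⟩ => ⟨fun i hi => ?_, fun i hi => ?_⟩,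
    fun ⟨hneg, hpos⟩ => ⟨by simpa using hpos 0 (Nat.zero_le m), hneg m le_rfl, hpos m le_rfl⟩⟩
  · have := eq_sub_of_abs_sub_succ_le_one (f := fun i : ℕ => Y (-(i:ℤ)) ω) hback
      (by simp [h0, hneg, hcast m le_rfl]) hi
    simpa [h0, hcast i hi] using this
  · have := eq_sub_of_abs_sub_succ_le_one (f := fun i : ℕ => Y (i:ℤ) ω) hfwd
      (by simp [h0, hpos, hcast m le_rfl]) hi
    simpa [h0, hcast i hi] using this

lemma ConditionS.measure_peak_toReal [IsFiniteMeasure P] (hS : ConditionS P N ε Y) (hN : 1 ≤ N)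
    {m : ℕ} (hm : m ≤ N) :
    (P {ω | Y 0 ω = N ∧ Y (-(m:ℤ)) ω = ((N - m : ℕ):ℝ) ∧ Y m ω = ((N - m : ℕ):ℝ)}).toReal
      = ε ^ (2 * N - 1) * (∏ i ∈ Finset.range m, transProb P Y 1 (N - i) (N - i - 1)) ^ 2 := by
  have hpast : MeasurableSet[sigmaOf Y (Iic 0)]
      (pathEvent Y (fun i => -(i:ℤ)) (fun i => ((N - i : ℕ):ℝ)) m) :=
    measurableSet_pathEvent fun i _ => by simp
  have hfuture : MeasurableSet[sigmaOf Y (Ici 0)]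
      (pathEvent Y (fun i => (i:ℤ)) (fun i => ((N - i : ℕ):ℝ)) m) :=
    measurableSet_pathEvent fun i _ => by simp
  have hstart {t : ℕ → ℤ} (ht : t 0 = 0) :
      pathEvent Y t (fun i => ((N - i : ℕ):ℝ)) m ⊆ {ω | Y 0 ω = N} :=
    fun ω h => by simpa [ht] using h 0 (Nat.zero_le m)
  rw [hS.measure_peak_eq_inter hm,
    hS.2.1.measure_inter hpast hfuture (hstart (by simp)) (hstart (by simp)),
    hS.measure_descent_backward hN hm, hS.measure_descent_forward hN m, hS.measure_top_toReal hN,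
    mul_mul_mul_comm, mul_div_right_comm, mul_self_div_self, sq]

end ConditionS

lemma tendsto_transProb_pred [MeasurableSpace Ω] {P : Measure Ω} [IsFiniteMeasure P] {N : ℕ}
    {Y : ℝ → ℤ → Ω → ℝ} (hY : ∀ᶠ ε in 𝓝[>] 0, ConditionS P N ε (Y ε)) {k : ℕ} (hk : 1 ≤ k)
    (hkN : k ≤ N) : Tendsto (fun ε => transProb P (Y ε) 1 k (k - 1)) (𝓝[>] 0) (𝓝 1) := by
  have hlow : Tendsto (fun ε : ℝ => (1 + ε)⁻¹) (𝓝[>] 0) (𝓝 1) := by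
    have : Tendsto (fun ε : ℝ => (1 + ε)⁻¹) (𝓝 0) (𝓝 (1 + 0)⁻¹) :=
      (tendsto_const_nhds.add tendsto_id).inv₀ (by norm_num)
    simpa using this.mono_left nhdsWithin_le_nhds
  refine tendsto_of_tendsto_of_tendsto_of_le_of_le' hlow tendsto_const_nhds ?_
    (.of_forall fun ε => transProb_le_one 1 k (k - 1))
  filter_upwards [hY, Ioo_mem_nhdsGT one_pos] with ε hS hε
  exact hS.inv_one_add_le_transProb hε.1 hε.2.le hk hkN

theorem conditionS_P_A_inter_B_general [MeasurableSpace Ω] (P : Measure Ω)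
    [IsProbabilityMeasure P] (N : ℕ) (m : ℕ) (hm2 : 2 * m < N)
    (Y : ℝ → ℤ → Ω → ℝ)
    (hY : ∀ ε ∈ Set.Ioc (0:ℝ) (1/3), ConditionS P N ε (Y ε)) :
    Tendsto (fun ε : ℝ =>
        (P {ω | Y ε 0 ω = (N:ℝ) ∧ Y ε (-(m:ℤ)) ω = ((N - m : ℕ):ℝ)
              ∧ Y ε (m:ℤ) ω = ((N - m : ℕ):ℝ)}).toReal / ε^(2*N-1))
      (𝓝[>] 0) (𝓝 1) := by
  have hY' : ∀ᶠ ε in 𝓝[>] 0, ConditionS P N ε (Y ε) :=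
    eventually_of_mem (Ioc_mem_nhdsGT (by norm_num)) hY
  have hR : Tendsto (fun ε => ∏ i ∈ Finset.range m, transProb P (Y ε) 1 (N - i) (N - i - 1))
      (𝓝[>] 0) (𝓝 1) := by
    simpa using tendsto_finsetProd (Finset.range m) fun i hi =>
      tendsto_transProb_pred hY' (k := N - i) (by have := Finset.mem_range.1 hi; omega)
        (Nat.sub_le N i)
  refine (one_pow (M := ℝ) 2 ▸ hR.pow 2).congr' ?_
  filter_upwards [hY', self_mem_nhdsWithin] with ε hS hε
  rw [hS.measure_peak_toReal (by omega) (by omega), mul_div_cancel_left₀ _ (pow_pos hε _).ne']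

/-- Eq. (2.20): with `A_ε = {Y^{(ε)}_0 = N}` and `B_ε = {Y^{(ε)}_{-m} = Y^{(ε)}_m = N−m}`
for `1 ≤ m < N/2`, one has `P(A_ε ∩ B_ε) ~ ε^{2N−1}` as `ε → 0+`. -/
theorem conditionS_P_A_inter_B [MeasurableSpace Ω] (P : Measure Ω)
    [IsProbabilityMeasure P] (N : ℕ) (hN : 3 ≤ N) (m : ℕ) (hm1 : 1 ≤ m) (hm2 : 2 * m < N)
    (Y : ℝ → ℤ → Ω → ℝ)
    (hY : ∀ ε ∈ Set.Ioc (0:ℝ) (1/3), ConditionS P N ε (Y ε)) :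
    Tendsto (fun ε : ℝ =>
        (P {ω | Y ε 0 ω = (N:ℝ) ∧ Y ε (-(m:ℤ)) ω = ((N - m : ℕ):ℝ)
              ∧ Y ε (m:ℤ) ω = ((N - m : ℕ):ℝ)}).toReal / ε^(2*N-1))
      (𝓝[>] 0) (𝓝 1) :=
  conditionS_P_A_inter_B_general P N m hm2 Y hY

end
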